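/- arXiv:1409.0824 — 2 statements merged into one kernel-verified Lean document; each statement's English description precedes it below -/
import Mathlib

section
/- Let p, q, r be pairwise distinct sentential variables. Then C(p∧r, q) ∧ C(p∧¬r, q) ⊨_Δ C(p,q). -/
/-- Formulas of the preference language L, generated from sentential
variables by negation, conjunction, and the binary connective ⪰. -/
inductive Fml (α : Type) : Type where
  | var : α → Fml α
  | neg : Fml α → Fml α
  | conj : Fml α → Fml α → Fml α
  | succeq : Fml α → Fml α → Fml α

namespace Fml

variable {α : Type}

/-- φ∨ψ := ¬(¬φ∧¬ψ) -/
def disj (φ ψ : Fml α) : Fml α := neg (conj (neg φ) (neg ψ))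
/-- φ→ψ := ¬φ∨ψ -/
def impl (φ ψ : Fml α) : Fml α := disj (neg φ) ψ
/-- φ↔ψ := (φ→ψ)∧(ψ→φ) -/
def iffF (φ ψ : Fml α) : Fml α := conj (impl φ ψ) (impl ψ φ)
/-- φ≻ψ := (φ⪰ψ)∧¬(ψ⪰φ) -/
def succ (φ ψ : Fml α) : Fml α := conj (succeq φ ψ) (neg (succeq ψ φ))
/-- ⊤ := p→p for a fixed variable p -/
def topF (p : α) : Fml α := impl (var p) (var p)
/-- ⊥ := ¬⊤ -/
def botF (p : α) : Fml α := neg (topF p)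
/-- ◻φ := ¬(¬φ⪰¬φ) -/
def box (φ : Fml α) : Fml α := neg (succeq (neg φ) (neg φ))
/-- ◇φ := φ⪰φ -/
def dia (φ : Fml α) : Fml α := succeq φ φ
/-- Conditional obligation C(φ,ψ) := (φ∧ψ) ≻ (φ∧¬ψ) -/
def Cond (φ ψ : Fml α) : Fml α := succ (conj φ ψ) (conj φ (neg ψ))
/-- Obligation Oψ := C(⊤,ψ), where ⊤ uses the fixed variable p -/
def Ob (p : α) (ψ : Fml α) : Fml α := Cond (topF p) ψ
/-- Permission Pψ := ¬O¬ψ -/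
def Perm (p : α) (ψ : Fml α) : Fml α := neg (Ob p (neg ψ))

end Fml

/-- A model (W,S,U,T): a nonempty set of worlds, a selection function
picking a member of each nonempty set of worlds, a real-valued utility
function, and a truth-assignment. -/
structure Model (α : Type) : Type 1 where
  W : Type
  nonempty : Nonempty W
  S : W → Set W → W
  S_mem : ∀ (w : W) (A : Set W), A.Nonempty → S w A ∈ A
  U : W → ℝ
  T : α → Set W

open Classical in
/-- The proposition ⟦φ⟧_M expressed by φ in the model M. -/
noncomputable def sat {α : Type} (M : Model α) : Fml α → Set M.W
  | .var p => M.T p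
  | .neg θ => (sat M θ)ᶜ
  | .conj θ ψ => sat M θ ∩ sat M ψ
  | .succeq θ ψ =>
      if sat M θ = ∅ ∨ sat M ψ = ∅ then ∅
      else {w | M.U (M.S w (sat M θ)) ≥ M.U (M.S w (sat M ψ))}

/-- φ ⊨ ψ : in every model, ⟦φ⟧ ⊆ ⟦ψ⟧. -/
def Implies {α : Type} (φ ψ : Fml α) : Prop :=
  ∀ M : Model α, sat M φ ⊆ sat M ψ

/-- ⊨ φ : in every model, ⟦φ⟧ = W. -/
def Valid {α : Type} (φ : Fml α) : Prop :=
  ∀ M : Model α, sat M φ = Set.univ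

/-- S is a selection function on W = 𝒫(Props): for each world w and
nonempty set A of worlds, S w A ∈ A. -/
def IsSelection {α : Type} (S : Set α → Set (Set α) → Set α) : Prop :=
  ∀ (w : Set α) (A : Set (Set α)), A.Nonempty → S w A ∈ A

/-- S is Δ-based: no w₁ ∈ A has w Δ w₁ properly included in w Δ S(w,A). -/
def DeltaBased {α : Type} (S : Set α → Set (Set α) → Set α) : Prop :=
  ∀ (w : Set α) (A : Set (Set α)), A.Nonempty →
    ¬ ∃ w1 ∈ A, symmDiff w w1 ⊂ symmDiff w (S w A)

/-- A Δ model: W = 𝒫(Props), T(p) = {w | p ∈ w}, and a Δ-based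
selection function. -/
structure DeltaModel (α : Type) : Type where
  S : Set α → Set (Set α) → Set α
  S_mem : ∀ (w : Set α) (A : Set (Set α)), A.Nonempty → S w A ∈ A
  delta : DeltaBased S
  U : Set α → ℝ

/-- The underlying model of a Δ model. -/
def DeltaModel.toModel {α : Type} (M : DeltaModel α) : Model α where
  W := Set α
  nonempty := ⟨∅⟩
  S := M.S
  S_mem := M.S_mem
  U := M.U
  T := fun p => {w : Set α | p ∈ w}

/-- φ ⊨_Δ ψ : in every Δ model, ⟦φ⟧ ⊆ ⟦ψ⟧. -/
def DeltaImplies {α : Type} (φ ψ : Fml α) : Prop :=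
  ∀ M : DeltaModel α, sat M.toModel φ ⊆ sat M.toModel ψ

/-- The g-distance between two worlds: the (possibly infinite) sum of the
weights of the variables in their symmetric difference. -/
noncomputable def gdist {α : Type} (g : α → ℝ) (w0 w1 : Set α) : ENNReal :=
  ∑' v : ↥(symmDiff w0 w1), ENNReal.ofReal (g v)

/-- S is g-based: no w' ∈ A is strictly g-closer to w than S(w,A). -/
def GBased {α : Type} (g : α → ℝ) (S : Set α → Set (Set α) → Set α) : Prop :=
  ∀ (w : Set α) (A : Set (Set α)), A.Nonempty →
    ¬ ∃ w' ∈ A, gdist g w w' < gdist g w (S w A)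


/-!
A Δ-based selection function picks, from a set of worlds cut out by literals, the unique world
closest to `w`: it adds the positive literals to `w` and removes the negative ones. If `r ∈ w`,
that world already satisfies `r`, so adding the conjunct `r` to both sides of `C(p, q)` does not
change the two worlds being compared; if `r ∉ w`, the same holds for `¬r`. Hence whichever of
`C(p ∧ r, q)` and `C(p ∧ ¬r, q)` matches `w` already decides `C(p, q)` at `w`.
-/

open Fml

variable {α : Type}

section Model

variable (M : Model α)

lemma sat_succeq {θ ψ : Fml α} (hθ : (sat M θ).Nonempty) (hψ : (sat M ψ).Nonempty) :
    sat M (succeq θ ψ) = {w | M.U (M.S w (sat M ψ)) ≤ M.U (M.S w (sat M θ))} := by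
  rw [sat, if_neg (not_or.2 ⟨hθ.ne_empty, hψ.ne_empty⟩)]

lemma mem_sat_cond_iff {φ ψ : Fml α} (hA : (sat M (conj φ ψ)).Nonempty)
    (hB : (sat M (conj φ (neg ψ))).Nonempty) (w : M.W) :
    w ∈ sat M (Cond φ ψ) ↔
      M.U (M.S w (sat M (conj φ (neg ψ)))) < M.U (M.S w (sat M (conj φ ψ))) := by
  rw [Cond, succ, sat, sat, sat_succeq M hA hB, sat_succeq M hB hA]
  simp only [Set.mem_inter_iff, Set.mem_compl_iff, Set.mem_ofPred_eq]
  exact lt_iff_le_not_ge.symm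

lemma sat_conj_conj_eq_inter (φ χ ψ : Fml α) :
    sat M (conj (conj φ χ) ψ) = sat M (conj φ ψ) ∩ sat M χ :=
  Set.inter_right_comm _ _ _

lemma mem_sat_cond_conj_iff {φ χ ψ : Fml α} {w : M.W}
    (hA : (sat M (conj φ ψ) ∩ sat M χ).Nonempty)
    (hB : (sat M (conj φ (neg ψ)) ∩ sat M χ).Nonempty)
    (hSA : M.S w (sat M (conj φ ψ) ∩ sat M χ) = M.S w (sat M (conj φ ψ)))
    (hSB : M.S w (sat M (conj φ (neg ψ)) ∩ sat M χ) = M.S w (sat M (conj φ (neg ψ)))) :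
    w ∈ sat M (Cond (conj φ χ) ψ) ↔ w ∈ sat M (Cond φ ψ) := by
  rw [mem_sat_cond_iff M (hA.mono Set.inter_subset_left) (hB.mono Set.inter_subset_left),
    ← hSA, ← hSB, ← sat_conj_conj_eq_inter, ← sat_conj_conj_eq_inter]
  rw [← sat_conj_conj_eq_inter] at hA hB
  exact mem_sat_cond_iff M hA hB w

end Model

/-- The proposition of the conjunction of the literals `v` (`v ∈ P`) and `¬v` (`v ∈ N`). -/
def cube (P N : Set α) : Set (Set α) := {a | P ⊆ a ∧ Disjoint a N}

lemma cube_inter_setOf_mem (P N : Set α) (r : α) :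
    cube P N ∩ {a | r ∈ a} = cube (insert r P) N := by
  ext a
  simp only [cube, Set.mem_inter_iff, Set.mem_ofPred_eq, Set.insert_subset_iff]
  tauto

lemma cube_inter_compl_setOf_mem (P N : Set α) (r : α) :
    cube P N ∩ {a | r ∈ a}ᶜ = cube P (insert r N) := by
  ext a
  simp only [cube, Set.mem_inter_iff, Set.mem_compl_iff, Set.mem_ofPred_eq,
    Set.disjoint_insert_right]
  tauto

lemma union_sdiff_mem_cube {P N : Set α} (hPN : Disjoint P N) (w : Set α) :
    (w ∪ P) \ N ∈ cube P N :=
  ⟨Set.subset_sdiff.2 ⟨Set.subset_union_right, hPN⟩, Set.disjoint_sdiff_left⟩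

lemma cube_nonempty {P N : Set α} (hPN : Disjoint P N) : (cube P N).Nonempty :=
  ⟨_, union_sdiff_mem_cube hPN ∅⟩

lemma cube_inter_setOf_mem_nonempty {P N : Set α} (hPN : Disjoint P N) {r : α} (hrN : r ∉ N) :
    (cube P N ∩ {a | r ∈ a}).Nonempty := by
  rw [cube_inter_setOf_mem]
  exact cube_nonempty (Set.disjoint_insert_left.2 ⟨hrN, hPN⟩)

lemma cube_inter_compl_setOf_mem_nonempty {P N : Set α} (hPN : Disjoint P N) {r : α}
    (hrP : r ∉ P) : (cube P N ∩ {a | r ∈ a}ᶜ).Nonempty := by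
  rw [cube_inter_compl_setOf_mem]
  exact cube_nonempty (Set.disjoint_insert_right.2 ⟨hrP, hPN⟩)

lemma symmDiff_union_sdiff_subset {P N a : Set α} (ha : a ∈ cube P N) (w : Set α) :
    symmDiff w ((w ∪ P) \ N) ⊆ symmDiff w a := by
  intro x hx
  simp only [Set.mem_symmDiff, Set.mem_sdiff, Set.mem_union] at hx ⊢
  rcases hx with ⟨hxw, hxN⟩ | ⟨⟨hxwP, -⟩, hxw⟩
  · have hxN : x ∈ N := by tauto
    exact Or.inl ⟨hxw, fun hxa => Set.disjoint_left.1 ha.2 hxa hxN⟩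
  · exact Or.inr ⟨ha.1 (hxwP.resolve_left hxw), hxw⟩

namespace DeltaModel

variable (M : DeltaModel α)

lemma S_eq_of_forall_symmDiff_subset {w u : Set α} {A : Set (Set α)} (hu : u ∈ A)
    (hmin : ∀ a ∈ A, symmDiff w u ⊆ symmDiff w a) : M.S w A = u := by
  have hA : A.Nonempty := ⟨u, hu⟩
  have hle := hmin _ (M.S_mem w A hA)
  by_contra hne
  exact M.delta w A hA ⟨u, hu, hle.ssubset_of_ne fun h =>
    hne (symmDiff_right_injective w h).symm⟩

lemma S_cube {P N : Set α} (hPN : Disjoint P N) (w : Set α) :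
    M.S w (cube P N) = (w ∪ P) \ N :=
  M.S_eq_of_forall_symmDiff_subset (union_sdiff_mem_cube hPN w)
    fun _ ha => symmDiff_union_sdiff_subset ha w

lemma S_cube_inter_setOf_mem {P N : Set α} (hPN : Disjoint P N) {w : Set α} {r : α}
    (hrw : r ∈ w) (hrN : r ∉ N) :
    M.S w (cube P N ∩ {a | r ∈ a}) = M.S w (cube P N) := by
  rw [cube_inter_setOf_mem, M.S_cube (Set.disjoint_insert_left.2 ⟨hrN, hPN⟩), M.S_cube hPN,
    Set.union_insert, Set.insert_eq_of_mem (Set.mem_union_left P hrw)]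

lemma S_cube_inter_compl_setOf_mem {P N : Set α} (hPN : Disjoint P N) {w : Set α} {r : α}
    (hrw : r ∉ w) (hrP : r ∉ P) :
    M.S w (cube P N ∩ {a | r ∈ a}ᶜ) = M.S w (cube P N) := by
  rw [cube_inter_compl_setOf_mem, M.S_cube (Set.disjoint_insert_right.2 ⟨hrP, hPN⟩),
    M.S_cube hPN, Set.sdiff_insert_of_notMem fun h => h.elim hrw hrP]

lemma sat_var (v : α) : sat M.toModel (var v) = {a : Set α | v ∈ a} := rfl

lemma sat_var_eq_cube (v : α) : sat M.toModel (var v) = cube {v} ∅ := by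
  rw [sat_var]
  ext a
  simp [cube]

lemma mem_sat_cond_conj_var_iff {φ ψ : Fml α} {P N P' N' : Set α}
    (hA : sat M.toModel (conj φ ψ) = cube P N) (hB : sat M.toModel (conj φ (neg ψ)) = cube P' N')
    (hPN : Disjoint P N) (hPN' : Disjoint P' N') {w : Set α} {r : α} (hrw : r ∈ w)
    (hrN : r ∉ N) (hrN' : r ∉ N') :
    w ∈ sat M.toModel (Cond (conj φ (var r)) ψ) ↔ w ∈ sat M.toModel (Cond φ ψ) := by
  refine mem_sat_cond_conj_iff M.toModel ?_ ?_ ?_ ?_ <;> rw [sat_var] <;> simp only [hA, hB]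
  · exact cube_inter_setOf_mem_nonempty hPN hrN
  · exact cube_inter_setOf_mem_nonempty hPN' hrN'
  · exact M.S_cube_inter_setOf_mem hPN hrw hrN
  · exact M.S_cube_inter_setOf_mem hPN' hrw hrN'

lemma mem_sat_cond_conj_neg_var_iff {φ ψ : Fml α} {P N P' N' : Set α}
    (hA : sat M.toModel (conj φ ψ) = cube P N) (hB : sat M.toModel (conj φ (neg ψ)) = cube P' N')
    (hPN : Disjoint P N) (hPN' : Disjoint P' N') {w : Set α} {r : α} (hrw : r ∉ w)
    (hrP : r ∉ P) (hrP' : r ∉ P') :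
    w ∈ sat M.toModel (Cond (conj φ (neg (var r))) ψ) ↔ w ∈ sat M.toModel (Cond φ ψ) := by
  refine mem_sat_cond_conj_iff M.toModel ?_ ?_ ?_ ?_ <;> rw [sat, sat_var] <;> simp only [hA, hB]
  · exact cube_inter_compl_setOf_mem_nonempty hPN hrP
  · exact cube_inter_compl_setOf_mem_nonempty hPN' hrP'
  · exact M.S_cube_inter_compl_setOf_mem hPN hrw hrP
  · exact M.S_cube_inter_compl_setOf_mem hPN' hrw hrP'

end DeltaModel

theorem stmt_14 {α : Type} (p q r : α) (hpq : p ≠ q) (hpr : p ≠ r) (hqr : q ≠ r) :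
    DeltaImplies
      (conj (Cond (conj (var p) (var r)) (var q))
            (Cond (conj (var p) (neg (var r))) (var q)))
      (Cond (var p) (var q)) := by
  intro M (w : Set α) ⟨hw₁, hw₂⟩
  have hA : sat M.toModel (conj (var p) (var q)) = cube {q, p} ∅ := by
    rw [sat, M.sat_var_eq_cube]
    exact cube_inter_setOf_mem _ _ _
  have hB : sat M.toModel (conj (var p) (neg (var q))) = cube {p} {q} := by
    rw [sat, M.sat_var_eq_cube]
    exact (cube_inter_compl_setOf_mem _ _ _).trans (by rw [← Set.singleton_def])
  have hAdisj : Disjoint ({q, p} : Set α) ∅ := Set.disjoint_empty _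
  have hBdisj : Disjoint ({p} : Set α) {q} := Set.disjoint_singleton.2 hpq
  by_cases hr : r ∈ w
  · exact (M.mem_sat_cond_conj_var_iff hA hB hAdisj hBdisj hr (Set.notMem_empty r)
      (Ne.symm hqr)).1 hw₁
  · exact (M.mem_sat_cond_conj_neg_var_iff hA hB hAdisj hBdisj hr
      (by simp [hpr.symm, hqr.symm]) (Ne.symm hpr)).1 hw₂
end

section
/- Let p and q be distinct sentential variables. Then O(p∧q) ∧ O(p∧¬q) ⊨_Δ Op. -/
/-!
In a Δ model the selection from a set of worlds defined by literals is the world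
obtained from `w` by flipping exactly the literals that fail at `w`, and `w` itself
whenever `w` lies in the set. If `p ∉ w`, then `O(p ∧ q)` (when `q ∈ w`) or
`O(p ∧ ¬q)` (when `q ∉ w`) already compares `w ∪ {p}` with `w`. If `p ∈ w`, the two
obligations compare `w` with its `q`-flip in opposite directions unless the
selection from `¬(p ∧ ±q)` is `w \ {p}`, which gives `w \ {p} < w`.
-/

open Fml

section Semantics

variable {α : Type} (M : Model α)

@[simp]
lemma sat_topF (p : α) : sat M (topF p) = Set.univ := by
  simp [sat, topF, impl, disj]

lemma mem_sat_succeq {φ ψ : Fml α} {w : M.W} :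
    w ∈ sat M (succeq φ ψ) ↔ (sat M φ).Nonempty ∧ (sat M ψ).Nonempty ∧
      M.U (M.S w (sat M ψ)) ≤ M.U (M.S w (sat M φ)) := by
  simp only [sat, Set.nonempty_iff_ne_empty]
  split_ifs with h
  · simp only [Set.mem_empty_iff_false, false_iff]
    tauto
  · simp_all

lemma mem_sat_Ob {p : α} {ψ : Fml α} {w : M.W} :
    w ∈ sat M (Ob p ψ) ↔ (sat M ψ).Nonempty ∧ (sat M ψ)ᶜ.Nonempty ∧
      M.U (M.S w (sat M ψ)ᶜ) < M.U (M.S w (sat M ψ)) := by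
  have hψ : sat M (conj (topF p) ψ) = sat M ψ := by simp [sat]
  have hnψ : sat M (conj (topF p) (neg ψ)) = (sat M ψ)ᶜ := by simp [sat]
  show w ∈ sat M (succeq _ _) ∩ (sat M (succeq _ _))ᶜ ↔ _
  rw [Set.mem_inter_iff, Set.mem_compl_iff, mem_sat_succeq, mem_sat_succeq, hψ, hnψ]
  constructor
  · rintro ⟨⟨h₁, h₂, -⟩, h⟩
    exact ⟨h₁, h₂, lt_of_not_ge fun hle => h ⟨h₂, h₁, hle⟩⟩
  · rintro ⟨h₁, h₂, hlt⟩
    exact ⟨⟨h₁, h₂, hlt.le⟩, fun ⟨_, _, hle⟩ => hle.not_gt hlt⟩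

end Semantics

def IsClosest {α : Type} (w : Set α) (A : Set (Set α)) (m : Set α) : Prop :=
  m ∈ A ∧ ∀ z ∈ A, symmDiff w m ⊆ symmDiff w z

section Closest

variable {α : Type} {w m : Set α} {A : Set (Set α)}

lemma isClosest_self (hw : w ∈ A) : IsClosest w A w :=
  ⟨hw, fun z _ => by simp⟩

lemma isClosest_of_agree (V : Set α) (hm : m ∈ A) (hV : symmDiff w m ⊆ V)
    (hA : ∀ z ∈ A, ∀ v ∈ V, v ∈ z ↔ v ∈ m) : IsClosest w A m := by
  refine ⟨hm, fun z hz v hv => ?_⟩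
  have := hA z hz v (hV hv)
  rw [Set.mem_symmDiff] at hv ⊢
  tauto

variable (w) {p q : α}

lemma isClosest_insert : IsClosest w {z | p ∈ z} (insert p w) :=
  isClosest_of_agree {p} (by simp) (fun v => by simp [Set.mem_symmDiff]; tauto)
    (fun z hz v hv => by simp_all)

lemma isClosest_diff : IsClosest w {z | p ∈ z}ᶜ (w \ {p}) :=
  isClosest_of_agree {p} (by simp) (fun v => by simp [Set.mem_symmDiff]; tauto)
    (fun z hz v hv => by simp_all)

lemma isClosest_insert_insert :
    IsClosest w ({z | p ∈ z} ∩ {z | q ∈ z}) (insert p (insert q w)) :=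
  isClosest_of_agree {p, q} (by simp) (fun v => by simp [Set.mem_symmDiff]; tauto)
    (fun z hz v hv => by rcases hv with rfl | rfl <;> simp_all)

lemma isClosest_insert_diff (hpq : p ≠ q) :
    IsClosest w ({z | p ∈ z} ∩ {z | q ∈ z}ᶜ) (insert p (w \ {q})) :=
  isClosest_of_agree {p, q} (by simp [hpq.symm]) (fun v => by simp [Set.mem_symmDiff]; tauto)
    (fun z hz v hv => by rcases hv with rfl | rfl <;> simp_all [eq_comm])

end Closest

namespace DeltaModel

variable {α : Type} (M : DeltaModel α) {w m m' : Set α} {A B : Set (Set α)}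

lemma S_eq_of_symmDiff_subset (hm : m ∈ A) (h : symmDiff w m ⊆ symmDiff w (M.S w A)) :
    M.S w A = m := by
  by_contra hne
  exact M.delta w A ⟨m, hm⟩ ⟨m, hm, h.lt_of_ne fun h' => hne (symmDiff_right_injective w h').symm⟩

lemma S_eq_of_isClosest (h : IsClosest w A m) : M.S w A = m :=
  M.S_eq_of_symmDiff_subset h.1 (h.2 _ (M.S_mem w A ⟨m, h.1⟩))

lemma S_self (hw : w ∈ A) : M.S w A = w :=
  M.S_eq_of_isClosest (isClosest_self hw)

lemma S_union_eq_or (h : IsClosest w A m) (h' : IsClosest w B m') :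
    M.S w (A ∪ B) = m ∨ M.S w (A ∪ B) = m' := by
  rcases M.S_mem w (A ∪ B) ⟨m, Or.inl h.1⟩ with hA | hB
  · exact Or.inl (M.S_eq_of_symmDiff_subset (Or.inl h.1) (h.2 _ hA))
  · exact Or.inr (M.S_eq_of_symmDiff_subset (Or.inr h'.1) (h'.2 _ hB))

variable {p q : α}

theorem U_S_compl_lt_of_inter_of_inter_compl (hpq : p ≠ q) (w : Set α)
    (h₁ : M.U (M.S w ({z | p ∈ z} ∩ {z | q ∈ z})ᶜ) <
      M.U (M.S w ({z | p ∈ z} ∩ {z | q ∈ z})))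
    (h₂ : M.U (M.S w ({z | p ∈ z} ∩ {z | q ∈ z}ᶜ)ᶜ) <
      M.U (M.S w ({z | p ∈ z} ∩ {z | q ∈ z}ᶜ))) :
    M.U (M.S w {z | p ∈ z}ᶜ) < M.U (M.S w {z | p ∈ z}) := by
  rw [M.S_eq_of_isClosest (isClosest_insert_insert w)] at h₁
  rw [M.S_eq_of_isClosest (isClosest_insert_diff w hpq)] at h₂
  rw [M.S_eq_of_isClosest (isClosest_insert w), M.S_eq_of_isClosest (isClosest_diff w)]
  by_cases hp : p ∈ w
  · rw [Set.insert_eq_self.mpr hp]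
    by_cases hq : q ∈ w
    · -- `O(p ∧ ¬q)` makes the `q`-flip of `w` better than `w`, so the selection from
      -- `¬(p ∧ q)` that `O(p ∧ q)` ranks below `w` cannot be that flip: it is `w \ {p}`.
      rw [Set.insert_eq_self.mpr hq, Set.insert_eq_self.mpr hp, Set.compl_inter] at h₁
      rw [(Set.insert_eq_self (s := w \ {q})).mpr ⟨hp, hpq⟩, M.S_self (by simp [hq])] at h₂
      rcases M.S_union_eq_or (isClosest_diff w) (isClosest_diff w) with h | h <;> rw [h] at h₁
      · exact h₁
      · exact absurd h₁ h₂.not_gt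
    · rw [Set.insert_comm, Set.insert_eq_self.mpr hp, M.S_self (by simp [hq])] at h₁
      rw [Set.sdiff_singleton_eq_self hq, Set.insert_eq_self.mpr hp, Set.compl_inter,
        compl_compl] at h₂
      rcases M.S_union_eq_or (isClosest_diff w) (isClosest_insert w) with h | h <;> rw [h] at h₂
      · exact h₂
      · exact absurd h₂ h₁.not_gt
  · rw [Set.sdiff_singleton_eq_self hp]
    by_cases hq : q ∈ w
    · rwa [Set.insert_eq_self.mpr hq, M.S_self (by simp [hp])] at h₁
    · rwa [Set.sdiff_singleton_eq_self hq, M.S_self (by simp [hp])] at h₂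

end DeltaModel

open Fml in
theorem stmt_16 {α : Type} (p q : α) (hpq : p ≠ q) (p0 : α) :
    DeltaImplies
      (conj (Ob p0 (conj (var p) (var q))) (Ob p0 (conj (var p) (neg (var q)))))
      (Ob p0 (var p)) := by
  intro M w ⟨hpq_ob, hpnq_ob⟩
  obtain ⟨-, -, h₁⟩ := (mem_sat_Ob M.toModel).mp hpq_ob
  obtain ⟨-, -, h₂⟩ := (mem_sat_Ob M.toModel).mp hpnq_ob
  refine (mem_sat_Ob M.toModel).mpr ⟨⟨({p} : Set α), rfl⟩, ⟨(∅ : Set α), id⟩, ?_⟩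
  exact M.U_S_compl_lt_of_inter_of_inter_compl hpq w h₁ h₂
end
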